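/- Let G be a connected, bipartite (2-colorable), d-regular simple graph on M vertices with d > 0, and let A be its adjacency matrix. Then for every integer j ≥ 1, the eigenspace of the j-th Kronecker power A^{⊗j} (viewed as a linear endomorphism of the space of real vectors indexed by Fin j → Fin M) for the eigenvalue d^j has dimension 2^{j-1}. -/

import Mathlib

/-!
Since `A` is symmetric it has a real eigenbasis `b` with eigenvalues `λ`. The product vectors
`t ↦ ∏ i, b (x i) (t i)` form an eigenbasis of `A^{⊗j}` with eigenvalues `∏ i, λ (x i)`, so
the eigenspace for `d^j` has dimension `#{x | ∏ i, λ (x i) = d^j}`. As `|λ k| ≤ d`, such a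
product equals `d^j` exactly when every factor is `±d` with an even number of `-d`'s. For a
connected `d`-regular graph, `d` is a simple eigenvalue (the kernel of the Laplacian counts
components), and flipping signs on one colour class turns `d`-eigenvectors into
`-d`-eigenvectors, so `-d` is simple as well. The count is then the number of even subsets of
`Fin j`, namely `2^(j-1)`.
-/

open Matrix

/-- The j-th Kronecker power of an M×M matrix, indexed by functions `Fin j → Fin M`. -/
noncomputable def kronPow {M : ℕ} (A : Matrix (Fin M) (Fin M) ℝ) (j : ℕ) :
    Matrix (Fin j → Fin M) (Fin j → Fin M) ℝ :=
  Matrix.of fun x y => ∏ i, A (x i) (y i)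

open Finset

namespace Module.Basis

variable {K V ι : Type*} [Field K] [AddCommGroup V] [Module K V]

lemma repr_apply_of_apply_eq_smul (b : Basis ι K V) {f : Module.End K V} {g : ι → K}
    (hb : ∀ i, f (b i) = g i • b i) (v : V) (i : ι) :
    b.repr (f v) i = g i * b.repr v i := by
  have hcoord : (b.coord i).comp f = g i • b.coord i := b.ext fun k => by
    by_cases hki : k = i
    · subst hki
      simp [hb]
    · simp [hb, hki]
  simpa using LinearMap.congr_fun hcoord v

lemma eigenspace_eq_span_of_apply_eq_smul (b : Basis ι K V) {f : Module.End K V} {g : ι → K}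
    (hb : ∀ i, f (b i) = g i • b i) (μ : K) :
    f.eigenspace μ = Submodule.span K (b '' {i | g i = μ}) := by
  refine le_antisymm (fun v hv => ?_) (Submodule.span_le.2 ?_)
  · rw [b.mem_span_image]
    intro i hi
    have hμ := congrArg (fun w => b.repr w i) (Module.End.mem_eigenspace_iff.1 hv)
    simp only [b.repr_apply_of_apply_eq_smul hb, map_smul, Finsupp.smul_apply, smul_eq_mul] at hμ
    exact mul_right_cancel₀ (Finsupp.mem_support_iff.1 hi) hμ
  · rintro _ ⟨i, hi, rfl⟩
    exact Module.End.mem_eigenspace_iff.2 (hi ▸ hb i)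

lemma finrank_eigenspace_of_apply_eq_smul [Fintype ι] [DecidableEq K] (b : Basis ι K V)
    {f : Module.End K V} {g : ι → K} (hb : ∀ i, f (b i) = g i • b i) (μ : K) :
    finrank K (f.eigenspace μ) = #{i | g i = μ} := by
  have hli : LinearIndependent K fun i : {i | g i = μ} => b i :=
    b.linearIndependent.comp _ Subtype.val_injective
  rw [b.eigenspace_eq_span_of_apply_eq_smul hb, Set.image_eq_range, finrank_span_eq_card hli,
    Fintype.card_subtype]
  rfl

end Module.Basis

namespace Module.End

variable {K V : Type*} [Field K] [AddCommGroup V] [Module K V]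

lemma map_eigenspace_of_anticomm {f : End K V} (e : V ≃ₗ[K] V) (he : ∀ v, f (e v) = -e (f v))
    (μ : K) : (f.eigenspace μ).map (e : V →ₗ[K] V) = f.eigenspace (-μ) := by
  ext w
  rw [Submodule.mem_map_equiv, mem_eigenspace_iff, mem_eigenspace_iff]
  constructor
  · intro h
    simpa [h] using he (e.symm w)
  · intro h
    have h' := he (e.symm w)
    rw [LinearEquiv.apply_symm_apply, h, neg_smul, neg_inj] at h'
    apply e.injective
    rw [← h', map_smul, LinearEquiv.apply_symm_apply]

lemma finrank_eigenspace_neg_of_anticomm {f : End K V} (e : V ≃ₗ[K] V)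
    (he : ∀ v, f (e v) = -e (f v)) (μ : K) :
    finrank K (f.eigenspace (-μ)) = finrank K (f.eigenspace μ) := by
  rw [← map_eigenspace_of_anticomm e he, LinearEquiv.finrank_map_eq]

end Module.End

section KronPow

variable {M j : ℕ}

lemma kronPow_mulVec_prod (A : Matrix (Fin M) (Fin M) ℝ) (w : Fin j → Fin M → ℝ) :
    kronPow A j *ᵥ (fun t => ∏ i, w i (t i)) = fun t => ∏ i, (A *ᵥ w i) (t i) := by
  funext t
  simp only [mulVec, dotProduct, kronPow, of_apply, ← prod_mul_distrib]
  rw [prod_univ_sum, Fintype.piFinset_univ]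

lemma kronPow_mulVec_prod_of_mulVec_eq_smul (A : Matrix (Fin M) (Fin M) ℝ)
    {w : Fin j → Fin M → ℝ} {μ : Fin j → ℝ} (hw : ∀ i, A *ᵥ w i = μ i • w i) :
    kronPow A j *ᵥ (fun t => ∏ i, w i (t i)) = (∏ i, μ i) • fun t => ∏ i, w i (t i) := by
  funext t
  simp [kronPow_mulVec_prod, hw, prod_mul_distrib]

lemma kronPow_mul (A B : Matrix (Fin M) (Fin M) ℝ) :
    kronPow (A * B) j = kronPow A j * kronPow B j := by
  ext x z
  simp only [kronPow, mul_apply, of_apply, ← prod_mul_distrib]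
  rw [prod_univ_sum, Fintype.piFinset_univ]

lemma kronPow_one : kronPow (1 : Matrix (Fin M) (Fin M) ℝ) j = 1 := by
  ext x y
  by_cases h : x = y
  · subst h
    simp [kronPow]
  · obtain ⟨i, hi⟩ := Function.ne_iff.1 h
    rw [one_apply_ne h]
    exact prod_eq_zero (mem_univ i) (one_apply_ne hi)

noncomputable instance invertibleKronPow (A : Matrix (Fin M) (Fin M) ℝ) [Invertible A] :
    Invertible (kronPow A j) :=
  ⟨kronPow (⅟A) j, by rw [← kronPow_mul, invOf_mul_self, kronPow_one],
    by rw [← kronPow_mul, mul_invOf_self, kronPow_one]⟩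

noncomputable def kronPowBasis (b : Module.Basis (Fin M) ℝ (Fin M → ℝ)) (j : ℕ) :
    Module.Basis (Fin j → Fin M) ℝ ((Fin j → Fin M) → ℝ) :=
  letI := (Pi.basisFun ℝ (Fin M)).invertibleToMatrix b
  (Pi.basisFun ℝ _).map
    ((kronPow ((Pi.basisFun ℝ (Fin M)).toMatrix b) j).toLinearEquiv' inferInstance)

lemma kronPowBasis_apply (b : Module.Basis (Fin M) ℝ (Fin M → ℝ)) (x : Fin j → Fin M) :
    kronPowBasis b j x = fun t => ∏ i, b (x i) (t i) := by
  funext t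
  rw [kronPowBasis, Module.Basis.map_apply, Pi.basisFun_apply, ← LinearEquiv.coe_coe,
    toLinearEquiv'_apply, toLin'_apply, mulVec_single_one]
  simp [kronPow, Module.Basis.toMatrix_apply]

end KronPow

namespace SimpleGraph

variable {V : Type*} {G : SimpleGraph V}

lemma Colorable.exists_sign_neg_of_adj (hbip : G.Colorable 2) :
    ∃ s : V → ℝ, s * s = 1 ∧ ∀ ⦃x y⦄, G.Adj x y → s y = -s x := by
  obtain ⟨C⟩ := hbip
  refine ⟨fun x => if C x = 0 then 1 else -1, ?_, fun x y hxy => ?_⟩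
  · funext x
    simp only [Pi.mul_apply, Pi.one_apply]
    split_ifs <;> norm_num
  · have hflip : ∀ a b : Fin 2, a ≠ b →
        (if b = 0 then (1 : ℝ) else -1) = -if a = 0 then 1 else -1 := by
      intro a b
      fin_cases a <;> fin_cases b <;> norm_num
    exact hflip _ _ (C.valid hxy)

variable [Fintype V] [DecidableRel G.Adj] {d : ℕ}

lemma adjMatrix_mulVec_mul_of_sign {s : V → ℝ} (hs : ∀ ⦃x y⦄, G.Adj x y → s y = -s x)
    (v : V → ℝ) : G.adjMatrix ℝ *ᵥ (s * v) = -(s * G.adjMatrix ℝ *ᵥ v) := by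
  funext x
  simp only [adjMatrix_mulVec_apply, Pi.mul_apply, Pi.neg_apply, mul_sum, ← sum_neg_distrib]
  refine sum_congr rfl fun u hu => ?_
  rw [hs ((G.mem_neighborFinset x u).1 hu), neg_mul]

lemma IsRegularOfDegree.abs_le_of_adjMatrix_mulVec_eq_smul (hreg : G.IsRegularOfDegree d)
    {v : V → ℝ} {μ : ℝ} (hv0 : v ≠ 0) (hv : G.adjMatrix ℝ *ᵥ v = μ • v) :
    |μ| ≤ d := by
  obtain ⟨x₁, hx₁⟩ := Function.ne_iff.1 hv0
  obtain ⟨x₀, -, hmax⟩ := exists_max_image univ (fun x => |v x|) ⟨x₁, mem_univ _⟩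
  have hpos : 0 < |v x₀| := (abs_pos.2 hx₁).trans_le (hmax x₁ (mem_univ _))
  refine le_of_mul_le_mul_right ?_ hpos
  calc |μ| * |v x₀| = |∑ u ∈ G.neighborFinset x₀, v u| := by
        rw [← abs_mul, ← adjMatrix_mulVec_apply, hv, Pi.smul_apply, smul_eq_mul]
    _ ≤ ∑ u ∈ G.neighborFinset x₀, |v u| := abs_sum_le_sum_abs _ _
    _ ≤ ∑ _u ∈ G.neighborFinset x₀, |v x₀| := sum_le_sum fun u _ => hmax u (mem_univ _)
    _ = d * |v x₀| := by rw [sum_const, card_neighborFinset_eq_degree, hreg, nsmul_eq_mul]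

variable [DecidableEq V]

lemma Colorable.finrank_eigenspace_adjMatrix_neg (hbip : G.Colorable 2) (μ : ℝ) :
    Module.finrank ℝ (Module.End.eigenspace (toLin' (G.adjMatrix ℝ)) (-μ)) =
      Module.finrank ℝ (Module.End.eigenspace (toLin' (G.adjMatrix ℝ)) μ) := by
  obtain ⟨s, hss, hs⟩ := hbip.exists_sign_neg_of_adj
  let e := LinearEquiv.ofInvolutive (LinearMap.mulLeft ℝ s) fun v => by
    simp [← mul_assoc, hss]
  exact Module.End.finrank_eigenspace_neg_of_anticomm e (adjMatrix_mulVec_mul_of_sign hs) μ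

lemma IsRegularOfDegree.eigenspace_adjMatrix_eq_ker_lapMatrix (hreg : G.IsRegularOfDegree d) :
    Module.End.eigenspace (toLin' (G.adjMatrix ℝ)) d =
      LinearMap.ker (toLin' (G.lapMatrix ℝ)) := by
  ext v
  simp only [Module.End.mem_eigenspace_iff, LinearMap.mem_ker, toLin'_apply, funext_iff,
    adjMatrix_mulVec_apply, lapMatrix_mulVec_apply, Pi.smul_apply, Pi.zero_apply, smul_eq_mul,
    sub_eq_zero, hreg _]
  exact forall_congr' fun _ => eq_comm

lemma Connected.finrank_eigenspace_adjMatrix_degree (hconn : G.Connected)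
    (hreg : G.IsRegularOfDegree d) :
    Module.finrank ℝ (Module.End.eigenspace (toLin' (G.adjMatrix ℝ)) d) = 1 := by
  rw [hreg.eigenspace_adjMatrix_eq_ker_lapMatrix,
    ← card_connectedComponent_eq_finrank_ker_toLin'_lapMatrix, Fintype.card_eq_one_iff]
  exact ⟨G.connectedComponentMk hconn.nonempty.some,
    fun _ => hconn.preconnected.subsingleton_connectedComponent.elim _ _⟩

end SimpleGraph

lemma Finset.card_powerset_filter_even {α : Type*} (s : Finset α) :
    #{t ∈ s.powerset | Even #t} = 2 ^ (#s - 1) := by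
  classical
  obtain rfl | hs := s.eq_empty_or_nonempty
  · rfl -- `#∅ - 1 = 0` in `ℕ`, matching the single subset `∅`
  have heven :
      ∑ t ∈ s.powerset with Even #t, (-1 : ℤ) ^ #t = #{t ∈ s.powerset | Even #t} := by
    rw [sum_congr rfl fun t ht => (mem_filter.1 ht).2.neg_one_pow]
    simp
  have hodd :
      ∑ t ∈ s.powerset with ¬Even #t, (-1 : ℤ) ^ #t = -#{t ∈ s.powerset | ¬Even #t} := by
    rw [sum_congr rfl fun t ht => (Nat.not_even_iff_odd.1 (mem_filter.1 ht).2).neg_one_pow]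
    simp
  have hbalance := sum_powerset_neg_one_pow_card_of_nonempty hs
  rw [← sum_filter_add_sum_filter_not _ (fun t => Even #t), heven, hodd] at hbalance
  have htotal := card_filter_add_card_filter_not (s := s.powerset) (fun t => Even #t)
  rw [card_powerset, ← Nat.two_pow_pred_add_two_pow_pred hs.card_pos] at htotal
  omega

section SignedProducts

variable {ι : Type*} [Fintype ι] [DecidableEq ι]

lemma prod_ite_mem_neg (t : Finset ι) (c : ℝ) :
    ∏ i, (if i ∈ t then -c else c) = (-1) ^ #t * c ^ Fintype.card ι := by
  have : ∀ i, (if i ∈ t then -c else c) = (if i ∈ t then -1 else 1) * c := fun i => by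
    split_ifs <;> ring
  simp_rw [this, prod_mul_distrib, prod_ite_mem, univ_inter, prod_const, card_univ]

lemma prod_eq_pow_card_iff_of_abs_le {a : ι → ℝ} {c : ℝ} (hc : 0 < c)
    (ha : ∀ i, |a i| ≤ c) :
    ∏ i, a i = c ^ Fintype.card ι ↔
      ∃ t : Finset ι, Even #t ∧ ∀ i, a i = if i ∈ t then -c else c := by
  constructor
  · intro h
    have hne : ∀ i, a i ≠ 0 := fun i hi => by
      have := prod_eq_zero (mem_univ i) hi
      rw [h] at this
      exact (pow_pos hc _).ne' this
    have habs : ∀ i, |a i| = c := by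
      by_contra! hlt
      obtain ⟨i, hi⟩ := hlt
      have : ∏ i, |a i| < ∏ _i : ι, c :=
        prod_lt_prod (fun i _ => abs_pos.2 (hne i)) (fun i _ => ha i)
          ⟨i, mem_univ i, (ha i).lt_of_ne hi⟩
      rw [← abs_prod, h, prod_const, card_univ, abs_of_pos (pow_pos hc _)] at this
      exact this.false
    have hsign : ∀ i, a i = if i ∈ ({i | a i = -c} : Finset ι) then -c else c := fun i => by
      rcases abs_eq hc.le |>.1 (habs i) with h' | h' <;> simp [h']
    refine ⟨_, ?_, hsign⟩
    rw [funext hsign, prod_ite_mem_neg] at h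
    exact (neg_one_pow_eq_one_iff_even (by norm_num)).1
      (mul_right_cancel₀ (pow_pos hc _).ne' (h.trans (one_mul _).symm))
  · rintro ⟨t, ht, hat⟩
    rw [funext hat, prod_ite_mem_neg, ht.neg_one_pow, one_mul]

lemma card_filter_prod_eq_pow_card {K : Type*} [Fintype K] [DecidableEq K] {lam : K → ℝ}
    {c : ℝ} (hc : 0 < c) (hlam : ∀ k, |lam k| ≤ c) (hpos : #{k | lam k = c} = 1)
    (hneg : #{k | lam k = -c} = 1) :
    #{x : ι → K | ∏ i, lam (x i) = c ^ Fintype.card ι} = 2 ^ (Fintype.card ι - 1) := by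
  obtain ⟨kp, hkp⟩ := card_eq_one.1 hpos
  obtain ⟨kn, hkn⟩ := card_eq_one.1 hneg
  have hkp' : ∀ k, lam k = c ↔ k = kp := fun k => by simpa using congrArg (k ∈ ·) hkp
  have hkn' : ∀ k, lam k = -c ↔ k = kn := fun k => by simpa using congrArg (k ∈ ·) hkn
  have hne : kp ≠ kn := fun h => by
    have hc' := (hkp' kp).2 rfl
    rw [h, (hkn' kn).2 rfl] at hc'
    linarith
  let φ : Finset ι → ι → K := fun t i => if i ∈ t then kn else kp
  have hφ : ∀ t i, φ t i = kn ↔ i ∈ t := fun t i => by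
    by_cases hi : i ∈ t <;> simp [φ, hi, hne]
  have hφinj : Function.Injective φ := fun t t' h => by
    ext i
    rw [← hφ, ← hφ, h]
  have hfilter : ({x : ι → K | ∏ i, lam (x i) = c ^ Fintype.card ι} : Finset _) =
      ({t | Even #t} : Finset (Finset ι)).image φ := by
    ext x
    simp only [mem_filter, mem_univ, true_and, mem_image,
      prod_eq_pow_card_iff_of_abs_le hc fun i => hlam (x i)]
    refine exists_congr fun t => and_congr_right fun _ => ?_
    rw [funext_iff]
    refine forall_congr' fun i => ?_
    by_cases hi : i ∈ t <;> simp [φ, hi, hkp', hkn', eq_comm]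
  rw [hfilter, card_image_of_injective _ hφinj, ← powerset_univ, card_powerset_filter_even,
    card_univ]

end SignedProducts

theorem kronPow_bipartite_principal_eigenspace_dim_general
    {M d : ℕ} (G : SimpleGraph (Fin M)) [DecidableRel G.Adj]
    (hconn : G.Connected) (hbip : G.Colorable 2)
    (hreg : G.IsRegularOfDegree d) (hd : 0 < d) (j : ℕ) :
    Module.finrank ℝ
      (Module.End.eigenspace (Matrix.toLin' (kronPow (G.adjMatrix ℝ) j)) ((d : ℝ) ^ j))
      = 2 ^ (j - 1) := by
  have hA := G.isHermitian_adjMatrix (R := ℝ)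
  let b := hA.eigenvectorBasis.toBasis.map (WithLp.linearEquiv 2 ℝ (Fin M → ℝ))
  have hb : ∀ k, G.adjMatrix ℝ *ᵥ b k = hA.eigenvalues k • b k := hA.mulVec_eigenvectorBasis
  have hcount := b.finrank_eigenspace_of_apply_eq_smul (f := toLin' (G.adjMatrix ℝ)) hb
  have hkron : ∀ x, toLin' (kronPow (G.adjMatrix ℝ) j) (kronPowBasis b j x) =
      (∏ i, hA.eigenvalues (x i)) • kronPowBasis b j x := fun x => by
    rw [toLin'_apply, kronPowBasis_apply, kronPow_mulVec_prod_of_mulVec_eq_smul _ fun i => hb _]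
  rw [(kronPowBasis b j).finrank_eigenspace_of_apply_eq_smul hkron]
  simpa using card_filter_prod_eq_pow_card (ι := Fin j) (Nat.cast_pos.2 hd)
    (fun k => hreg.abs_le_of_adjMatrix_mulVec_eq_smul (b.ne_zero k) (hb k))
    (by rw [← hcount, hconn.finrank_eigenspace_adjMatrix_degree hreg])
    (by rw [← hcount, hbip.finrank_eigenspace_adjMatrix_neg,
      hconn.finrank_eigenspace_adjMatrix_degree hreg])

/-- For a connected, regular, bipartite initiator of degree `d`, the eigenspace of the
`j`-th Kronecker power of its adjacency matrix for the eigenvalue `d^j` has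
dimension `2^{j-1}`. -/
theorem kronPow_bipartite_principal_eigenspace_dim
    {M d : ℕ} (G : SimpleGraph (Fin M)) [DecidableRel G.Adj]
    (hconn : G.Connected) (hbip : G.Colorable 2)
    (hreg : G.IsRegularOfDegree d) (hd : 0 < d) (j : ℕ) (hj : 1 ≤ j) :
    Module.finrank ℝ
      (Module.End.eigenspace (Matrix.toLin' (kronPow (G.adjMatrix ℝ) j)) ((d : ℝ) ^ j))
      = 2 ^ (j - 1) :=
  kronPow_bipartite_principal_eigenspace_dim_general G hconn hbip hreg hd j
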